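/- arXiv:1703.08331 — 2 statements merged into one kernel-verified Lean document; each statement's English description precedes it below -/
import Mathlib

section
/- Let $c_1,c>0$ and $\zeta>0$, and let $M:[0,T]\to[0,\infty)$ be a $C^1$ function satisfying the differential inequality $M'(t) + c_1 M(t)^{1+\zeta} \leq c$ for $t\in(0,T]$. Then there is a constant $C_M$ depending only on $c_1,c,\zeta,T$ (not on $M(0)$) such that $M(t) \leq C_M(1 + t^{-1/\zeta})$ for all $t\in(0,T]$. -/
/-!
`y(x) = (c₁ ζ x)^{-1/ζ}` solves `y' = -c₁ y^{1+ζ}` and blows up at `0`. Choosing `A`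
with `c₁ A^{1+ζ} > c`, superadditivity of `u ↦ u^{1+ζ}` makes `y + A` a strict supersolution of
`M' + c₁ M^{1+ζ} ≤ c`. Since `M` is bounded near `0`, it starts below `y + A` at some small time
`s > 0`, and the comparison principle keeps it there up to any `t`; the bound `y(t) + A` does not
involve `M`.
-/

open Set Filter Topology

theorem image_le_of_subsolution_of_strict_supersolution {f f' g g' : ℝ → ℝ} {F : ℝ → ℝ → ℝ}
    {a b : ℝ} (hf : ContinuousOn f (Icc a b))
    (hf' : ∀ x ∈ Ico a b, HasDerivWithinAt f (f' x) (Ici x) x) (hg : ContinuousOn g (Icc a b))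
    (hg' : ∀ x ∈ Ico a b, HasDerivWithinAt g (g' x) (Ici x) x) (hfa : f a ≤ g a)
    (hsub : ∀ x ∈ Ico a b, f' x ≤ F x (f x)) (hsuper : ∀ x ∈ Ico a b, F x (g x) < g' x) :
    ∀ ⦃x⦄, x ∈ Icc a b → f x ≤ g x :=
  image_le_of_deriv_right_lt_deriv_boundary' hf hf' hfa hg hg' fun x hx hfg =>
    (hsub x hx).trans_lt (hfg ▸ hsuper x hx)

theorem HasDerivWithinAt.Ici_of_Icc {f : ℝ → ℝ} {f' a b x : ℝ}
    (h : HasDerivWithinAt f f' (Icc a b) x) (hax : a ≤ x) (hxb : x < b) :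
    HasDerivWithinAt f f' (Ici x) x :=
  (h.mono (Icc_subset_Icc hax le_rfl)).mono_of_mem_nhdsWithin (Icc_mem_nhdsGE hxb)

theorem exists_lt_const_mul_rpow {c₁ q : ℝ} (hc₁ : 0 < c₁) (hq : 0 < q) (c : ℝ) :
    ∃ A : ℝ, 0 ≤ A ∧ c < c₁ * A ^ q :=
  ((eventually_ge_atTop 0).and
    (((tendsto_rpow_atTop hq).const_mul_atTop hc₁).eventually_gt_atTop c)).exists

noncomputable def blowupSolution (c₁ ζ x : ℝ) : ℝ :=
  (c₁ * ζ * x) ^ (-(1 / ζ))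

namespace blowupSolution

variable {c₁ ζ : ℝ}

theorem nonneg (hc₁ : 0 < c₁) (hζ : 0 < ζ) {x : ℝ} (hx : 0 ≤ x) : 0 ≤ blowupSolution c₁ ζ x :=
  Real.rpow_nonneg (by positivity) _

theorem eq_mul_rpow (hc₁ : 0 < c₁) (hζ : 0 < ζ) {x : ℝ} (hx : 0 ≤ x) :
    blowupSolution c₁ ζ x = (c₁ * ζ) ^ (-(1 / ζ)) * x ^ (-(1 / ζ)) :=
  Real.mul_rpow (by positivity) hx

theorem hasDerivAt (hc₁ : 0 < c₁) (hζ : 0 < ζ) {x : ℝ} (hx : 0 < x) :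
    HasDerivAt (blowupSolution c₁ ζ) (-c₁ * blowupSolution c₁ ζ x ^ (1 + ζ)) x := by
  have hkx : 0 < c₁ * ζ * x := by positivity
  have h := ((hasDerivAt_id' x).const_mul (c₁ * ζ)).rpow_const (p := -(1 / ζ)) (Or.inl hkx.ne')
  refine h.congr_deriv ?_
  rw [blowupSolution, ← Real.rpow_mul hkx.le, show -(1 / ζ) * (1 + ζ) = -(1 / ζ) - 1 by
    field_simp; ring]
  field_simp

theorem tendsto_nhdsGT_zero (hc₁ : 0 < c₁) (hζ : 0 < ζ) :
    Tendsto (blowupSolution c₁ ζ) (𝓝[>] 0) atTop := by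
  have h := (tendsto_rpow_neg_nhdsGT_zero (neg_lt_zero.2 (one_div_pos.2 hζ))).const_mul_atTop
    (Real.rpow_pos_of_pos (mul_pos hc₁ hζ) (-(1 / ζ)))
  refine h.congr' ?_
  filter_upwards [self_mem_nhdsWithin] with x hx
  exact (eq_mul_rpow hc₁ hζ (le_of_lt hx)).symm

end blowupSolution

theorem le_blowupSolution_add_of_deriv_add_mul_rpow_le {c₁ c ζ A t : ℝ} {M M' : ℝ → ℝ}
    (hc₁ : 0 < c₁) (hζ : 0 < ζ) (hA : 0 ≤ A) (hcA : c < c₁ * A ^ (1 + ζ)) (ht : 0 < t)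
    (hM : ContinuousOn M (Icc 0 t)) (hM' : ∀ x ∈ Ioo 0 t, HasDerivWithinAt M (M' x) (Ici x) x)
    (hsub : ∀ x ∈ Ioo 0 t, M' x + c₁ * M x ^ (1 + ζ) ≤ c) :
    M t ≤ blowupSolution c₁ ζ t + A := by
  set y := blowupSolution c₁ ζ
  obtain ⟨L, hL⟩ := isCompact_Icc.bddAbove_image hM
  obtain ⟨s, hLs, hs⟩ := ((blowupSolution.tendsto_nhdsGT_zero hc₁ hζ).eventually_ge_atTop L).and
    (Ioc_mem_nhdsGT ht) |>.exists
  have hy' : ∀ x, 0 < x → HasDerivAt (fun x => y x + A) (-c₁ * y x ^ (1 + ζ)) x :=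
    fun x hx => (blowupSolution.hasDerivAt hc₁ hζ hx).add_const A
  have hsuper : ∀ x ∈ Ico s t, c - c₁ * (y x + A) ^ (1 + ζ) < -c₁ * y x ^ (1 + ζ) := by
    intro x hx
    have hsuperadd := Real.add_rpow_le_rpow_add
      (blowupSolution.nonneg hc₁ hζ (hs.1.le.trans hx.1)) hA (le_add_of_nonneg_right hζ.le)
    linarith [mul_le_mul_of_nonneg_left hsuperadd hc₁.le]
  refine image_le_of_subsolution_of_strict_supersolution (F := fun x u => c - c₁ * u ^ (1 + ζ))
    (hM.mono (Icc_subset_Icc hs.1.le le_rfl)) (fun x hx => hM' x ⟨hs.1.trans_le hx.1, hx.2⟩)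
    (fun x hx => (hy' x (hs.1.trans_le hx.1)).continuousAt.continuousWithinAt)
    (fun x hx => (hy' x (hs.1.trans_le hx.1)).hasDerivWithinAt) ?_
    (fun x hx => by linarith [hsub x ⟨hs.1.trans_le hx.1, hx.2⟩]) hsuper ⟨hs.2, le_rfl⟩
  linarith [hL (mem_image_of_mem M ⟨hs.1.le, hs.2⟩)]

theorem nonlinear_gronwall_general
    (c₁ c ζ T : ℝ) (hc₁ : 0 < c₁) (hζ : 0 < ζ) :
    ∃ C_M : ℝ, 0 < C_M ∧
      ∀ (M M' : ℝ → ℝ),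
        (∀ t ∈ Icc (0:ℝ) T, 0 ≤ M t) →
        (∀ t ∈ Icc (0:ℝ) T, HasDerivWithinAt M (M' t) (Icc 0 T) t) →
        (∀ t ∈ Ioc (0:ℝ) T, M' t + c₁ * M t ^ (1 + ζ) ≤ c) →
        ∀ t ∈ Ioc (0:ℝ) T, M t ≤ C_M * (1 + t ^ (-(1 / ζ))) := by
  obtain ⟨A, hA, hcA⟩ := exists_lt_const_mul_rpow hc₁ (add_pos one_pos hζ) c
  set a := (c₁ * ζ) ^ (-(1 / ζ))
  have ha : 0 < a := Real.rpow_pos_of_pos (mul_pos hc₁ hζ) _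
  refine ⟨a + A, by positivity, fun M M' _ hMd hsub t ht => ?_⟩
  have hM : ContinuousOn M (Icc 0 t) := fun x hx =>
    (hMd x ⟨hx.1, hx.2.trans ht.2⟩).continuousWithinAt.mono (Icc_subset_Icc le_rfl ht.2)
  have hbound := le_blowupSolution_add_of_deriv_add_mul_rpow_le hc₁ hζ hA hcA ht.1 hM
    (fun x hx => (hMd x ⟨hx.1.le, hx.2.le.trans ht.2⟩).Ici_of_Icc hx.1.le (hx.2.trans_le ht.2))
    (fun x hx => hsub x ⟨hx.1, hx.2.le.trans ht.2⟩)
  rw [blowupSolution.eq_mul_rpow hc₁ hζ ht.1.le] at hbound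
  have htp : 0 < t ^ (-(1 / ζ)) := Real.rpow_pos_of_pos ht.1 _
  nlinarith

/-- Nonlinear Gronwall lemma: if `M ≥ 0` is `C¹` on `[0,T]` and satisfies
`M' + c₁ M^{1+ζ} ≤ c` on `(0,T]`, then `M(t) ≤ C_M (1 + t^{-1/ζ})` on `(0,T]`
with `C_M` depending only on `c₁, c, ζ, T` (not on `M(0)`). -/
theorem nonlinear_gronwall
    (c₁ c ζ T : ℝ) (hc₁ : 0 < c₁) (hc : 0 < c) (hζ : 0 < ζ) (hT : 0 < T) :
    ∃ C_M : ℝ, 0 < C_M ∧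
      ∀ (M M' : ℝ → ℝ),
        (∀ t ∈ Icc (0:ℝ) T, 0 ≤ M t) →
        (∀ t ∈ Icc (0:ℝ) T, HasDerivWithinAt M (M' t) (Icc 0 T) t) →
        (∀ t ∈ Ioc (0:ℝ) T, M' t + c₁ * M t ^ (1 + ζ) ≤ c) →
        ∀ t ∈ Ioc (0:ℝ) T, M t ≤ C_M * (1 + t ^ (-(1 / ζ))) :=
  nonlinear_gronwall_general c₁ c ζ T hc₁ hζ
end

section
/- With $\mathcal{W}(t)$ the transport semigroup from the diffeomorphism $\Theta(y)=\int_{y_0}^y dy'/\tau(y')$ where $\tau\in BC^1$, $\tau\geq\tau_0>0$, and $\tau(y)\leq\tau_* y$ for all $y>y_0$ (with $\tau_*=\|\tau\|_\infty/y_0$), one has the stability estimate $\|\mathcal{W}(t)f\|_{L_1(Y,y\,dy)} \leq e^{\tau_* t}\,\|f\|_{L_1(Y,y\,dy)}$ for all $t\geq 0$ and $f\in L_1(Y,y\,dy)$. -/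
open MeasureTheory Set Filter

/-!
Substituting `y = Φₜ z := Θ⁻¹ (Θ z + t)` turns `∫ y |W(t) f y| dy` into `∫ Φₜ z |f z| dz`: the
Jacobian `τ (Φₜ z) / τ z` cancels the factor in `W(t)`. Since `Θ' = 1 / τ ≥ 1 / Cτ`, the flow moves
points by at most `Cτ t`, and for `z > y₀` this gives `Φₜ z ≤ (1 + Cτ t / y₀) z ≤ e^{Cτ t / y₀} z`.
-/

theorem hasDerivAt_of_eq_integral_Ioc {E : Type*} [NormedAddCommGroup E] [NormedSpace ℝ E]
    [CompleteSpace E] {g F : ℝ → E} {a y : ℝ} (hg : ContinuousOn g (Ici a))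
    (hF : ∀ u, a < u → F u = ∫ s in Ioc a u, g s) (hy : a < y) : HasDerivAt F (g y) y := by
  have hg' : ContinuousOn g (Ioi a) := hg.mono Ioi_subset_Ici_self
  have hint : IntervalIntegrable g volume a y :=
    (hg.mono (uIcc_of_le hy.le ▸ Icc_subset_Ici_self)).intervalIntegrable
  refine (intervalIntegral.integral_hasDerivAt_right hint
    (hg'.stronglyMeasurableAtFilter isOpen_Ioi y hy)
    (hg'.continuousAt (isOpen_Ioi.mem_nhds hy))).congr_of_eventuallyEq ?_
  filter_upwards [isOpen_Ioi.mem_nhds hy] with u hu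
  rw [hF u hu, intervalIntegral.integral_of_le (le_of_lt hu)]

theorem add_mul_le_exp_div_mul {y₀ z C t : ℝ} (hy₀ : 0 < y₀) (hz : y₀ ≤ z) (hC : 0 ≤ C)
    (ht : 0 ≤ t) : z + C * t ≤ Real.exp (C / y₀ * t) * z := by
  have hCt : C * t ≤ C / y₀ * t * z := by
    rw [div_mul_eq_mul_div, div_mul_eq_mul_div, le_div_iff₀ hy₀]
    exact mul_le_mul_of_nonneg_left hz (mul_nonneg hC ht)
  calc z + C * t ≤ (C / y₀ * t + 1) * z := by linarith
    _ ≤ Real.exp (C / y₀ * t) * z :=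
      mul_le_mul_of_nonneg_right (Real.add_one_le_exp _) (hy₀.le.trans hz)

/-- `Θ` is the time the characteristic flow `ẏ = τ(y)` needs to travel from `a` to `y`;
it identifies `Ioi a` with `Ioi 0`, with inverse `Θinv`. -/
structure IsTravelTime (a : ℝ) (τ Θ Θinv : ℝ → ℝ) : Prop where
  τ_pos : ∀ y, a < y → 0 < τ y
  hasDerivAt : ∀ y, a < y → HasDerivAt Θ (τ y)⁻¹ y
  pos : ∀ y, a < y → 0 < Θ y
  inv_gt : ∀ x, 0 < x → a < Θinv x
  apply_inv : ∀ x, 0 < x → Θ (Θinv x) = x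
  inv_apply : ∀ y, a < y → Θinv (Θ y) = y

def transportFlow (Θ Θinv : ℝ → ℝ) (t z : ℝ) : ℝ := Θinv (Θ z + t)

noncomputable def transportSemigroup (τ Θ Θinv : ℝ → ℝ) (t : ℝ) (f : ℝ → ℝ) (y : ℝ) : ℝ :=
  if t ≤ Θ y then τ (Θinv (Θ y - t)) / τ y * f (Θinv (Θ y - t)) else 0

namespace IsTravelTime

variable {a t x z C : ℝ} {τ Θ Θinv : ℝ → ℝ}

theorem strictMonoOn (h : IsTravelTime a τ Θ Θinv) : StrictMonoOn Θ (Ioi a) :=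
  strictMonoOn_of_hasDerivWithinAt_pos (convex_Ioi a)
    (fun y hy => (h.hasDerivAt y hy).continuousAt.continuousWithinAt)
    (fun y hy => (h.hasDerivAt y (interior_subset hy)).hasDerivWithinAt)
    (fun y hy => inv_pos.2 (h.τ_pos y (interior_subset hy)))

theorem continuousAt_inv (h : IsTravelTime a τ Θ Θinv) (hx : 0 < x) : ContinuousAt Θinv x := by
  have hmono : StrictMonoOn Θinv (Ioi 0) := fun u hu v hv huv => by
    by_contra! hvu
    have := h.strictMonoOn.monotoneOn (h.inv_gt v hv) (h.inv_gt u hu) hvu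
    rw [h.apply_inv u hu, h.apply_inv v hv] at this
    exact this.not_gt huv
  have himage : Θinv '' Ioi 0 = Ioi a :=
    (image_subset_iff.2 h.inv_gt).antisymm fun y hy => ⟨Θ y, h.pos y hy, h.inv_apply y hy⟩
  refine hmono.continuousAt_of_image_mem_nhds (isOpen_Ioi.mem_nhds hx) ?_
  rw [himage]
  exact isOpen_Ioi.mem_nhds (h.inv_gt x hx)

theorem hasDerivAt_inv (h : IsTravelTime a τ Θ Θinv) (hx : 0 < x) :
    HasDerivAt Θinv (τ (Θinv x)) x := by
  have hτ := h.τ_pos _ (h.inv_gt x hx)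
  simpa only [inv_inv] using (h.hasDerivAt _ (h.inv_gt x hx)).of_local_left_inverse
    (h.continuousAt_inv hx) (inv_ne_zero hτ.ne')
    (eventually_of_mem (isOpen_Ioi.mem_nhds hx) h.apply_inv)

theorem apply_flow (h : IsTravelTime a τ Θ Θinv) (ht : 0 ≤ t) (hz : a < z) :
    Θ (transportFlow Θ Θinv t z) = Θ z + t :=
  h.apply_inv _ (add_pos_of_pos_of_nonneg (h.pos z hz) ht)

theorem flow_gt (h : IsTravelTime a τ Θ Θinv) (ht : 0 ≤ t) (hz : a < z) :
    a < transportFlow Θ Θinv t z :=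
  h.inv_gt _ (add_pos_of_pos_of_nonneg (h.pos z hz) ht)

theorem hasDerivAt_flow (h : IsTravelTime a τ Θ Θinv) (ht : 0 ≤ t) (hz : a < z) :
    HasDerivAt (transportFlow Θ Θinv t) (τ (transportFlow Θ Θinv t z) / τ z) z :=
  (h.hasDerivAt_inv (add_pos_of_pos_of_nonneg (h.pos z hz) ht)).comp z
    ((h.hasDerivAt z hz).add_const t)

theorem injOn_flow (h : IsTravelTime a τ Θ Θinv) (ht : 0 ≤ t) :
    InjOn (transportFlow Θ Θinv t) (Ioi a) := fun u hu v hv huv => by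
  have := congrArg Θ huv
  rw [h.apply_flow ht hu, h.apply_flow ht hv, add_left_inj] at this
  rw [← h.inv_apply u hu, ← h.inv_apply v hv, this]

theorem image_flow (h : IsTravelTime a τ Θ Θinv) (ht : 0 ≤ t) :
    transportFlow Θ Θinv t '' Ioi a = {y | a < y ∧ t < Θ y} := by
  refine subset_antisymm ?_ fun y ⟨hy, hty⟩ => ?_
  · rintro _ ⟨z, hz, rfl⟩
    exact ⟨h.flow_gt ht hz, by rw [h.apply_flow ht hz]; linarith [h.pos z hz]⟩
  · have hpos : 0 < Θ y - t := sub_pos.2 hty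
    refine ⟨Θinv (Θ y - t), h.inv_gt _ hpos, ?_⟩
    rw [transportFlow, h.apply_inv _ hpos, sub_add_cancel, h.inv_apply y hy]

/-- Travel time grows at rate at least `1 / C`, so in time `t` the flow moves by at most `C t`. -/
theorem flow_sub_le (h : IsTravelTime a τ Θ Θinv) (hC : ∀ y, a < y → τ y ≤ C) (ht : 0 ≤ t)
    (hz : a < z) : transportFlow Θ Θinv t z - z ≤ C * t := by
  have hw := h.flow_gt ht hz
  have hzw : z ≤ transportFlow Θ Θinv t z := by
    rw [← h.strictMonoOn.le_iff_le hz hw, h.apply_flow ht hz]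
    linarith
  have hCpos : 0 < C := (h.τ_pos z hz).trans_le (hC z hz)
  have hmvt := (convex_Ioi a).mul_sub_le_image_sub_of_le_deriv (f := Θ) (C := C⁻¹)
    (fun y hy => (h.hasDerivAt y hy).continuousAt.continuousWithinAt)
    (fun y hy => (h.hasDerivAt y (interior_subset hy)).differentiableAt.differentiableWithinAt)
    (fun y hy => by
      rw [interior_Ioi] at hy
      rw [(h.hasDerivAt y hy).deriv]
      exact inv_anti₀ (h.τ_pos y hy) (hC y hy))
    z hz _ hw hzw
  rw [h.apply_flow ht hz, add_sub_cancel_left] at hmvt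
  rwa [inv_mul_le_iff₀ hCpos] at hmvt

theorem transportSemigroup_flow (h : IsTravelTime a τ Θ Θinv) (ht : 0 ≤ t) (hz : a < z)
    (f : ℝ → ℝ) :
    transportSemigroup τ Θ Θinv t f (transportFlow Θ Θinv t z) =
      τ z / τ (transportFlow Θ Θinv t z) * f z := by
  rw [transportSemigroup, if_pos (by rw [h.apply_flow ht hz]; linarith [h.pos z hz]),
    h.apply_flow ht hz, add_sub_cancel_right, h.inv_apply z hz]

/-- Outside the image of the flow, `W(t) f` vanishes except at the one point where `Θ y = t`. -/
theorem setIntegral_eq_setIntegral_image_flow (h : IsTravelTime a τ Θ Θinv) (ht : 0 ≤ t)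
    (F : ℝ → ℝ → ℝ) (hF : ∀ y, F y 0 = 0) (f : ℝ → ℝ) :
    ∫ y in Ioi a, F y (transportSemigroup τ Θ Θinv t f y) =
      ∫ y in transportFlow Θ Θinv t '' Ioi a, F y (transportSemigroup τ Θ Θinv t f y) := by
  refine setIntegral_eq_of_subset_of_ae_sdiff_eq_zero measurableSet_Ioi.nullMeasurableSet
    (image_subset_iff.2 fun z => h.flow_gt ht) ?_
  have hnull : ({y | a < y ∧ Θ y = t} : Set ℝ).Subsingleton := fun u hu v hv =>
    h.strictMonoOn.injOn hu.1 hv.1 (hu.2.trans hv.2.symm)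
  filter_upwards [compl_mem_ae_iff.2 (hnull.measure_zero volume)] with y hy ⟨hya, hyimg⟩
  rw [h.image_flow ht] at hyimg
  have hlt : Θ y < t := lt_of_le_of_ne (not_lt.1 fun hty => hyimg ⟨hya, hty⟩)
    fun heq => hy ⟨hya, heq⟩
  rw [transportSemigroup, if_neg hlt.not_ge, hF]

theorem setIntegral_mul_abs_transportSemigroup (h : IsTravelTime a τ Θ Θinv) (ht : 0 ≤ t)
    (w f : ℝ → ℝ) :
    ∫ y in Ioi a, w y * |transportSemigroup τ Θ Θinv t f y| =
      ∫ z in Ioi a, w (transportFlow Θ Θinv t z) * |f z| := by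
  rw [h.setIntegral_eq_setIntegral_image_flow ht (fun y v => w y * |v|) (by simp),
    integral_image_eq_integral_abs_deriv_smul measurableSet_Ioi
      (fun z hz => (h.hasDerivAt_flow ht hz).hasDerivWithinAt) (h.injOn_flow ht)]
  refine setIntegral_congr_fun measurableSet_Ioi fun z hz => ?_
  have hτz := h.τ_pos z hz
  have hτw := h.τ_pos _ (h.flow_gt ht hz)
  rw [smul_eq_mul, h.transportSemigroup_flow ht hz, abs_mul, abs_div, abs_div,
    abs_of_pos hτz, abs_of_pos hτw]
  field_simp

end IsTravelTime

theorem transport_semigroup_stable_general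
    (y₀ τ₀ Cτ : ℝ) (hy₀ : 0 < y₀) (hτ₀ : 0 < τ₀)
    (τ : ℝ → ℝ)
    (hτC1 : ContDiffOn ℝ 1 τ (Ici y₀))
    (hτlb : ∀ y, y₀ < y → τ₀ ≤ τ y) (hτub : ∀ y, y₀ < y → τ y ≤ Cτ)
    (Θ Θinv : ℝ → ℝ)
    (hΘ : ∀ y, y₀ < y → Θ y = ∫ t in Ioc y₀ y, (τ t)⁻¹)
    (hΘpos : ∀ y, y₀ < y → 0 < Θ y)
    (hΘinv_mem : ∀ x : ℝ, 0 < x → y₀ < Θinv x)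
    (hΘ_Θinv : ∀ x : ℝ, 0 < x → Θ (Θinv x) = x)
    (hΘinv_Θ : ∀ y, y₀ < y → Θinv (Θ y) = y)
    (W : ℝ → (ℝ → ℝ) → ℝ → ℝ)
    (hW : ∀ t f y, W t f y =
      if t ≤ Θ y then τ (Θinv (Θ y - t)) / τ y * f (Θinv (Θ y - t)) else 0)
    (f : ℝ → ℝ)
    (hfint : IntegrableOn (fun y => y * |f y|) (Ioi y₀))
    (t : ℝ) (ht : 0 ≤ t) :
    ∫ y in Ioi y₀, y * |W t f y| ≤
      Real.exp (Cτ / y₀ * t) * ∫ y in Ioi y₀, y * |f y| := by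
  have hτcont := hτC1.continuousOn
  have hτpos : ∀ y ∈ Ici y₀, 0 < τ y := fun y hy =>
    hτ₀.trans_le (le_on_closure (s := Ioi y₀) hτlb continuousOn_const
      (closure_Ioi y₀ ▸ hτcont) (closure_Ioi y₀ ▸ hy))
  have hT : IsTravelTime y₀ τ Θ Θinv :=
    { τ_pos := fun y hy => hτpos y hy.le
      hasDerivAt := fun _ =>
        hasDerivAt_of_eq_integral_Ioc (hτcont.inv₀ fun s hs => (hτpos s hs).ne') hΘ
      pos := hΘpos
      inv_gt := hΘinv_mem
      apply_inv := hΘ_Θinv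
      inv_apply := hΘinv_Θ }
  have hCτ : 0 ≤ Cτ := (hτpos (y₀ + 1) (by simp)).le.trans (hτub _ (by linarith))
  obtain rfl : W = transportSemigroup τ Θ Θinv := funext fun t => funext fun f => funext (hW t f)
  rw [hT.setIntegral_mul_abs_transportSemigroup ht, ← integral_const_mul]
  refine integral_mono_of_nonneg ?_ (hfint.const_mul _) ?_ <;>
    filter_upwards [ae_restrict_mem measurableSet_Ioi] with z hz
  · exact mul_nonneg (hy₀.trans (hT.flow_gt ht hz)).le (abs_nonneg _)
  · rw [← mul_assoc]
    refine mul_le_mul_of_nonneg_right ?_ (abs_nonneg _)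
    linarith [hT.flow_sub_le hτub ht hz, add_mul_le_exp_div_mul hy₀ (le_of_lt hz) hCτ ht]

/-- Stability estimate for the transport semigroup: with `τ* = ‖τ‖_∞ / y₀`
(so that `τ(y) ≤ τ* y` on `Y`), one has
`‖W(t) f‖_{L₁(Y, y dy)} ≤ e^{τ* t} ‖f‖_{L₁(Y, y dy)}`. -/
theorem transport_semigroup_stable
    (y₀ τ₀ Cτ : ℝ) (hy₀ : 0 < y₀) (hτ₀ : 0 < τ₀)
    (τ : ℝ → ℝ)
    (hτC1 : ContDiffOn ℝ 1 τ (Ici y₀))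
    (hτlb : ∀ y, y₀ < y → τ₀ ≤ τ y) (hτub : ∀ y, y₀ < y → τ y ≤ Cτ)
    (Θ Θinv : ℝ → ℝ)
    (hΘ : ∀ y, y₀ < y → Θ y = ∫ t in Ioc y₀ y, (τ t)⁻¹)
    (hΘpos : ∀ y, y₀ < y → 0 < Θ y)
    (hΘinv_mem : ∀ x : ℝ, 0 < x → y₀ < Θinv x)
    (hΘ_Θinv : ∀ x : ℝ, 0 < x → Θ (Θinv x) = x)
    (hΘinv_Θ : ∀ y, y₀ < y → Θinv (Θ y) = y)
    (W : ℝ → (ℝ → ℝ) → ℝ → ℝ)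
    (hW : ∀ t f y, W t f y =
      if t ≤ Θ y then τ (Θinv (Θ y - t)) / τ y * f (Θinv (Θ y - t)) else 0)
    (f : ℝ → ℝ) (hfmeas : Measurable f)
    (hfint : IntegrableOn (fun y => y * |f y|) (Ioi y₀))
    (t : ℝ) (ht : 0 ≤ t) :
    ∫ y in Ioi y₀, y * |W t f y| ≤
      Real.exp (Cτ / y₀ * t) * ∫ y in Ioi y₀, y * |f y| :=
  transport_semigroup_stable_general y₀ τ₀ Cτ hy₀ hτ₀ τ hτC1 hτlb hτub Θ Θinv hΘ hΘpos hΘinv_mem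
    hΘ_Θinv hΘinv_Θ W hW f hfint t ht
end
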